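/- Let H be a real Hilbert space, g : H → ℝ ∪ {∞} proper, closed and convex, h : H → ℝ convex and L-smooth for some L > 0, and suppose Φ = g + h has a minimiser x* ∈ H. Let (e_k)_{k≥0} ⊆ H be a sequence of gradient errors and define the inexact proximal gradient iterates with step τ = 1/L: x_{k+1} = prox_{τg}( x_k − τ(∇h(x_k) + e_k) ), from any x_0 ∈ H. If the accumulated errors satisfy (1/√k) ∑_{i=0}^{k−1} ‖e_i‖ → 0 as k → ∞, then the averaged iterates x̄_k = (1/k)∑_{j=1}^k x_j satisfy Φ(x̄_k) → Φ(x*) as k → ∞. -/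

import Mathlib

noncomputable section
open Filter

/-- Convexity for extended-real-valued functions. -/
def ConvexFnE {H : Type*} [AddCommGroup H] [Module ℝ H] (f : H → EReal) : Prop :=
  ∀ x y : H, ∀ a b : ℝ, 0 ≤ a → 0 ≤ b → a + b = 1 →
    f (a • x + b • y) ≤ (a : EReal) * f x + (b : EReal) * f y

/-- `p` is the unique minimiser of `y ↦ f y + (1/(2τ))‖y − z‖²`, i.e. `p = prox_{τ f}(z)`. -/
def IsProxPt {H : Type*} [NormedAddCommGroup H] (f : H → EReal) (τ : ℝ) (z p : H) : Prop :=
  (∀ y : H, f p + ((1 / (2 * τ) * ‖p - z‖ ^ 2 : ℝ) : EReal)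
      ≤ f y + ((1 / (2 * τ) * ‖y - z‖ ^ 2 : ℝ) : EReal)) ∧
  ∀ q : H, (∀ y : H, f q + ((1 / (2 * τ) * ‖q - z‖ ^ 2 : ℝ) : EReal)
      ≤ f y + ((1 / (2 * τ) * ‖y - z‖ ^ 2 : ℝ) : EReal)) → q = p

/-! The prox step gives the three-point inequality for `g`; together with the descent lemma and the
gradient inequality for `h` it yields the one-step estimate
`Φ(x_{k+1}) - Φ(x*) + L/2 ‖x_{k+1} - x*‖² ≤ ‖e_k‖ ‖x_{k+1} - x*‖ + L/2 ‖x_k - x*‖²`.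
As the gap on the left is nonnegative, `‖x_k - x*‖ ≤ ‖x_0 - x*‖ + (2/L) E_k` with
`E_k = ∑_{i<k} ‖e_i‖`, and summing the estimate bounds `∑_{j<k} (Φ(x_{j+1}) - Φ(x*))` by
`E_k (‖x_0 - x*‖ + (2/L) E_k) + L/2 ‖x_0 - x*‖²`. Divided by `k` this is `o(1)` precisely because
`E_k = o(√k)`, and Jensen's inequality passes the bound to the averaged iterate. The extended-valued
`g` enters only through its real part on its effective domain, which is a convex function there. -/

open Finset Topology

section DistanceRecursion

variable {L : ℝ} {F d ε : ℕ → ℝ}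

lemma le_add_of_half_mul_sq_le {a b c : ℝ} (hL : 0 < L) (ha : 0 ≤ a) (hc : 0 ≤ c)
    (h : L / 2 * b ^ 2 ≤ c * b + L / 2 * a ^ 2) : b ≤ a + 2 / L * c := by
  by_contra! hlt
  have hgap : c < L / 2 * (b - a) := by
    have hcancel : L / 2 * (2 / L * c) = c := by field_simp
    nlinarith [mul_lt_mul_of_pos_left hlt (half_pos hL)]
  have hsum : 0 < b + a := by
    have : 0 ≤ 2 / L * c := by positivity
    linarith
  nlinarith [mul_lt_mul_of_pos_right hgap hsum]

lemma le_add_sum_of_step (hL : 0 < L) (hF : ∀ k, 0 ≤ F k) (hd : ∀ k, 0 ≤ d k)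
    (hε : ∀ k, 0 ≤ ε k)
    (hstep : ∀ k, F k + L / 2 * d (k + 1) ^ 2 ≤ ε k * d (k + 1) + L / 2 * d k ^ 2) (k : ℕ) :
    d k ≤ d 0 + 2 / L * ∑ i ∈ range k, ε i := by
  induction k with
  | zero => simp
  | succ k ih =>
    have := le_add_of_half_mul_sq_le (b := d (k + 1)) hL (hd k) (hε k)
      (by linarith [hstep k, hF k])
    rw [sum_range_succ]
    linarith

lemma sum_le_of_step (hL : 0 < L) (hF : ∀ k, 0 ≤ F k) (hd : ∀ k, 0 ≤ d k)
    (hε : ∀ k, 0 ≤ ε k)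
    (hstep : ∀ k, F k + L / 2 * d (k + 1) ^ 2 ≤ ε k * d (k + 1) + L / 2 * d k ^ 2) (k : ℕ) :
    ∑ j ∈ range k, F j ≤
      (∑ i ∈ range k, ε i) * (d 0 + 2 / L * ∑ i ∈ range k, ε i) + L / 2 * d 0 ^ 2 := by
  set R := d 0 + 2 / L * ∑ i ∈ range k, ε i
  have hterm : ∀ j ∈ range k, F j ≤ ε j * R + L / 2 * (d j ^ 2 - d (j + 1) ^ 2) := by
    intro j hj
    have hpartial : ∑ i ∈ range (j + 1), ε i ≤ ∑ i ∈ range k, ε i :=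
      sum_le_sum_of_subset_of_nonneg (range_subset_range.2 (mem_range.1 hj))
        fun i _ _ => hε i
    have hdist : d (j + 1) ≤ R := by
      have := le_add_sum_of_step hL hF hd hε hstep (j + 1)
      have : 2 / L * ∑ i ∈ range (j + 1), ε i ≤ 2 / L * ∑ i ∈ range k, ε i := by gcongr
      linarith
    nlinarith [hstep j, mul_le_mul_of_nonneg_left hdist (hε j)]
  calc ∑ j ∈ range k, F j
      ≤ ∑ j ∈ range k, (ε j * R + L / 2 * (d j ^ 2 - d (j + 1) ^ 2)) := sum_le_sum hterm
    _ = (∑ i ∈ range k, ε i) * R + L / 2 * (d 0 ^ 2 - d k ^ 2) := by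
      rw [sum_add_distrib, ← sum_mul, ← mul_sum, sum_range_sub' (fun j => d j ^ 2)]
    _ ≤ (∑ i ∈ range k, ε i) * R + L / 2 * d 0 ^ 2 := by nlinarith [sq_nonneg (d k)]

lemma tendsto_inv_mul_sum_of_step (hL : 0 < L) (hF : ∀ k, 0 ≤ F k) (hd : ∀ k, 0 ≤ d k)
    (hε : ∀ k, 0 ≤ ε k)
    (hstep : ∀ k, F k + L / 2 * d (k + 1) ^ 2 ≤ ε k * d (k + 1) + L / 2 * d k ^ 2)
    (herr : Tendsto (fun k : ℕ => (√k)⁻¹ * ∑ i ∈ range k, ε i) atTop (𝓝 0)) :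
    Tendsto (fun k : ℕ => (k : ℝ)⁻¹ * ∑ j ∈ range k, F j) atTop (𝓝 0) := by
  set s : ℕ → ℝ := fun k => (√k)⁻¹
  set a : ℕ → ℝ := fun k => (√k)⁻¹ * ∑ i ∈ range k, ε i
  have hs : Tendsto s atTop (𝓝 0) :=
    tendsto_inv_atTop_zero.comp (Real.tendsto_sqrt_atTop.comp tendsto_natCast_atTop_atTop)
  have hbound : Tendsto
      (fun k => d 0 * (s k * a k) + 2 / L * a k ^ 2 + L / 2 * d 0 ^ 2 * s k ^ 2) atTop (𝓝 0) := by
    simpa using (((hs.mul herr).const_mul (d 0)).add ((herr.pow 2).const_mul (2 / L))).add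
      ((hs.pow 2).const_mul (L / 2 * d 0 ^ 2))
  refine tendsto_of_tendsto_of_tendsto_of_le_of_le tendsto_const_nhds hbound
    (fun k => mul_nonneg (by positivity) (sum_nonneg fun j _ => hF j)) fun k => ?_
  have hinv : (k : ℝ)⁻¹ = s k ^ 2 := by simp only [s, inv_pow, Real.sq_sqrt k.cast_nonneg]
  calc (k : ℝ)⁻¹ * ∑ j ∈ range k, F j
      ≤ s k ^ 2 * ((∑ i ∈ range k, ε i) * (d 0 + 2 / L * ∑ i ∈ range k, ε i)
          + L / 2 * d 0 ^ 2) := by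
        rw [hinv]
        exact mul_le_mul_of_nonneg_left (sum_le_of_step hL hF hd hε hstep k) (sq_nonneg _)
    _ = _ := by simp only [a]; ring

end DistanceRecursion

section Average

variable {ι E : Type*} [AddCommGroup E] [Module ℝ E] {D : Set E} {s : Finset ι} {z : ι → E}

lemma sum_inv_card_eq_one (hs : s.Nonempty) : ∑ _i ∈ s, (#s : ℝ)⁻¹ = 1 := by
  rw [sum_const, nsmul_eq_mul, mul_inv_cancel₀ (Nat.cast_ne_zero.2 hs.card_ne_zero)]

lemma Convex.inv_card_smul_sum_mem (hD : Convex ℝ D) (hs : s.Nonempty)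
    (hz : ∀ i ∈ s, z i ∈ D) : (#s : ℝ)⁻¹ • ∑ i ∈ s, z i ∈ D := by
  rw [smul_sum]
  exact hD.sum_mem (fun _ _ => by positivity) (sum_inv_card_eq_one hs) hz

lemma ConvexOn.map_inv_card_smul_sum_le {Φ : E → ℝ} (hΦ : ConvexOn ℝ D Φ) (hs : s.Nonempty)
    (hz : ∀ i ∈ s, z i ∈ D) : Φ ((#s : ℝ)⁻¹ • ∑ i ∈ s, z i) ≤ (#s : ℝ)⁻¹ * ∑ i ∈ s, Φ (z i) := by
  rw [smul_sum, mul_sum]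
  exact hΦ.map_sum_le (fun _ _ => by positivity) (sum_inv_card_eq_one hs) hz

lemma sum_Icc_one_eq_sum_range {M : Type*} [AddCommMonoid M] (f : ℕ → M) (k : ℕ) :
    ∑ j ∈ Icc 1 k, f j = ∑ j ∈ range k, f (j + 1) := by
  rw [range_eq_Ico, sum_Ico_add' f 0 k 1, zero_add, Ico_add_one_right_eq_Icc]

lemma Convex.inv_natCast_smul_sum_Icc_mem (hD : Convex ℝ D) {x : ℕ → E}
    (hx : ∀ j, x (j + 1) ∈ D) {k : ℕ} (hk : k ≠ 0) : (k : ℝ)⁻¹ • ∑ j ∈ Icc 1 k, x j ∈ D := by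
  simpa [sum_Icc_one_eq_sum_range] using
    hD.inv_card_smul_sum_mem (nonempty_range_iff.2 hk) fun j _ => hx j

lemma ConvexOn.map_inv_natCast_smul_sum_Icc_le {Φ : E → ℝ} (hΦ : ConvexOn ℝ D Φ) {x : ℕ → E}
    (hx : ∀ j, x (j + 1) ∈ D) {k : ℕ} (hk : k ≠ 0) :
    Φ ((k : ℝ)⁻¹ • ∑ j ∈ Icc 1 k, x j) ≤ (k : ℝ)⁻¹ * ∑ j ∈ range k, Φ (x (j + 1)) := by
  simpa [sum_Icc_one_eq_sum_range] using
    hΦ.map_inv_card_smul_sum_le (nonempty_range_iff.2 hk) fun j _ => hx j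

end Average

section Inner

variable {H : Type*} [NormedAddCommGroup H] [InnerProductSpace ℝ H]

lemma norm_one_sub_smul_add_smul_sub_sq (p y z : H) (t : ℝ) :
    ‖(1 - t) • p + t • y - z‖ ^ 2 =
      (1 - t) * ‖p - z‖ ^ 2 + t * ‖y - z‖ ^ 2 - (1 - t) * t * ‖y - p‖ ^ 2 := by
  have hw : (1 - t) • p + t • y - z = (1 - t) • (p - z) + t • (y - z) := by module
  have hyp : y - p = (y - z) - (p - z) := by abel
  rw [hw, hyp]
  generalize p - z = u
  generalize y - z = v
  rw [norm_add_sq_real, norm_sub_sq_real, norm_smul, norm_smul, real_inner_smul_left,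
    real_inner_smul_right, real_inner_comm v, mul_pow, mul_pow, Real.norm_eq_abs,
    Real.norm_eq_abs, sq_abs, sq_abs]
  ring

lemma ConvexOn.three_point_inequality {D : Set H} {G : H → ℝ} (hG : ConvexOn ℝ D G) {c : ℝ}
    {z p y : H} (hp : p ∈ D)
    (hmin : ∀ w ∈ D, G p + c * ‖p - z‖ ^ 2 ≤ G w + c * ‖w - z‖ ^ 2) (hy : y ∈ D) :
    G p + c * ‖p - z‖ ^ 2 + c * ‖y - p‖ ^ 2 ≤ G y + c * ‖y - z‖ ^ 2 := by
  -- test the minimality of `p` against `(1 - t) • p + t • y`, divide by `t`, and let `t → 0⁺`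
  have hpartial : ∀ t ∈ Set.Ioc (0 : ℝ) 1,
      G p + c * ‖p - z‖ ^ 2 + (1 - t) * (c * ‖y - p‖ ^ 2) ≤ G y + c * ‖y - z‖ ^ 2 := by
    rintro t ⟨ht0, ht1⟩
    have hconvex := hG.2 hp hy (sub_nonneg.2 ht1) ht0.le (sub_add_cancel 1 t)
    have hw := hmin _ (hG.1 hp hy (sub_nonneg.2 ht1) ht0.le (sub_add_cancel 1 t))
    rw [norm_one_sub_smul_add_smul_sub_sq] at hw
    simp only [smul_eq_mul] at hconvex
    nlinarith
  have hlim : Tendsto (fun t : ℝ => G p + c * ‖p - z‖ ^ 2 + (1 - t) * (c * ‖y - p‖ ^ 2))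
      (𝓝[>] 0) (𝓝 (G p + c * ‖p - z‖ ^ 2 + (1 - 0) * (c * ‖y - p‖ ^ 2))) :=
    ((continuous_const.add ((continuous_const.sub continuous_id).mul continuous_const)).tendsto
      0).mono_left nhdsWithin_le_nhds
  rw [sub_zero, one_mul] at hlim
  exact le_of_tendsto hlim (mem_of_superset (Ioc_mem_nhdsGT zero_lt_one) hpartial)

end Inner

section Gradient

variable {H : Type*} [NormedAddCommGroup H] [InnerProductSpace ℝ H] [CompleteSpace H]
  {h : H → ℝ}

lemma hasDerivAt_comp_add_smul (hdiff : Differentiable ℝ h) (x d : H) (t : ℝ) :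
    HasDerivAt (fun s : ℝ => h (x + s • d)) (inner ℝ (gradient h (x + t • d)) d) t := by
  have hline : HasDerivAt (fun s : ℝ => x + s • d) d t := by
    simpa using ((hasDerivAt_id t).smul_const d).const_add x
  simpa [Function.comp_def] using
    (hdiff (x + t • d)).hasGradientAt.hasFDerivAt.comp_hasDerivAt t hline

lemma ConvexOn.add_inner_gradient_le (hconv : ConvexOn ℝ Set.univ h)
    (hdiff : Differentiable ℝ h) (x y : H) :
    h x + inner ℝ (gradient h x) (y - x) ≤ h y := by
  have hline : ConvexOn ℝ Set.univ (fun t : ℝ => h (x + t • (y - x))) := by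
    have := hconv.comp_affineMap (AffineMap.lineMap (k := ℝ) x y)
    rw [Set.preimage_univ] at this
    refine this.congr fun t _ => ?_
    rw [Function.comp_apply, AffineMap.lineMap_apply_module', add_comm]
  have := hline.le_slope_of_hasDerivAt (Set.mem_univ 0) (Set.mem_univ 1) zero_lt_one
    (hasDerivAt_comp_add_smul hdiff x (y - x) 0)
  simp only [slope_def_field, zero_smul, add_zero, one_smul, add_sub_cancel, sub_zero,
    div_one] at this
  linarith

lemma apply_le_add_inner_gradient_add_sq (hdiff : Differentiable ℝ h) {L : ℝ}
    (hlip : ∀ x y : H, ‖gradient h x - gradient h y‖ ≤ L * ‖x - y‖) (x y : H) :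
    h y ≤ h x + inner ℝ (gradient h x) (y - x) + L / 2 * ‖y - x‖ ^ 2 := by
  set d := y - x
  set ψ : ℝ → ℝ := fun t =>
    h (x + t • d) - t * inner ℝ (gradient h x) d - L / 2 * t ^ 2 * ‖d‖ ^ 2
  have hψ : ∀ t, HasDerivAt ψ
      (inner ℝ (gradient h (x + t • d)) d - inner ℝ (gradient h x) d - L * t * ‖d‖ ^ 2) t := by
    intro t
    have := ((hasDerivAt_comp_add_smul hdiff x d t).sub
      ((hasDerivAt_id t).mul_const (inner ℝ (gradient h x) d))).sub
      (((hasDerivAt_pow 2 t).const_mul (L / 2)).mul_const (‖d‖ ^ 2))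
    refine this.congr_deriv ?_
    simp only [one_mul, Nat.cast_ofNat, Nat.add_one_sub_one, pow_one]
    ring
  have hanti : AntitoneOn ψ (Set.Icc 0 1) := by
    refine antitoneOn_of_hasDerivWithinAt_nonpos (convex_Icc 0 1)
      (HasDerivAt.continuousOn fun t _ => hψ t) (fun t _ => (hψ t).hasDerivWithinAt) ?_
    intro t ht
    rw [interior_Icc] at ht
    have hgrad : inner ℝ (gradient h (x + t • d) - gradient h x) d ≤ L * t * ‖d‖ ^ 2 :=
      calc inner ℝ (gradient h (x + t • d) - gradient h x) d
          ≤ ‖gradient h (x + t • d) - gradient h x‖ * ‖d‖ := real_inner_le_norm _ _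
        _ ≤ L * ‖(x + t • d) - x‖ * ‖d‖ := by gcongr; exact hlip _ _
        _ = L * t * ‖d‖ ^ 2 := by
          rw [add_sub_cancel_left, norm_smul, Real.norm_of_nonneg ht.1.le]; ring
    rw [inner_sub_left] at hgrad
    linarith
  have := hanti (Set.left_mem_Icc.2 zero_le_one) (Set.right_mem_Icc.2 zero_le_one) zero_le_one
  simp only [ψ, d, zero_smul, add_zero, one_smul, zero_mul, sub_zero, one_mul, one_pow,
    zero_pow two_ne_zero, mul_zero, add_sub_cancel] at this
  linarith

lemma inexact_prox_gradient_step_le {D : Set H} {G : H → ℝ} (hG : ConvexOn ℝ D G)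
    (hconv : ConvexOn ℝ Set.univ h) (hdiff : Differentiable ℝ h) {L : ℝ} (hL : L ≠ 0)
    (hlip : ∀ x y : H, ‖gradient h x - gradient h y‖ ≤ L * ‖x - y‖) {x e p xs : H}
    (hp : p ∈ D) (hprox : ∀ y ∈ D, G p + L / 2 * ‖p - (x - (1 / L) • (gradient h x + e))‖ ^ 2
      ≤ G y + L / 2 * ‖y - (x - (1 / L) • (gradient h x + e))‖ ^ 2) (hxs : xs ∈ D) :
    G p + h p + L / 2 * ‖p - xs‖ ^ 2 ≤ G xs + h xs + ‖e‖ * ‖p - xs‖ + L / 2 * ‖x - xs‖ ^ 2 := by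
  have hexpand : ∀ y : H, L / 2 * ‖y - (x - (1 / L) • (gradient h x + e))‖ ^ 2
      = L / 2 * ‖y - x‖ ^ 2 + inner ℝ (y - x) (gradient h x + e)
        + 1 / (2 * L) * ‖gradient h x + e‖ ^ 2 := by
    intro y
    rw [sub_sub_eq_add_sub, add_sub_right_comm, norm_add_sq_real, real_inner_smul_right,
      norm_smul, mul_pow, Real.norm_eq_abs, sq_abs]
    field_simp
  have hthree := hG.three_point_inequality hp hprox hxs
  rw [hexpand, hexpand] at hthree
  have hdescent := apply_le_add_inner_gradient_add_sq hdiff hlip x p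
  have hfirst := hconv.add_inner_gradient_le hdiff x xs
  have herror : inner ℝ (xs - p) e ≤ ‖e‖ * ‖p - xs‖ := by
    rw [norm_sub_rev, mul_comm]; exact real_inner_le_norm _ _
  rw [norm_sub_rev xs p, norm_sub_rev xs x] at hthree
  simp only [inner_add_right, real_inner_comm (gradient h x)] at hthree hdescent hfirst
  have hsplit : inner ℝ (xs - x) e - inner ℝ (p - x) e = inner ℝ (xs - p) e := by
    rw [← inner_sub_left, sub_sub_sub_cancel_right]
  linarith

theorem ConvexOn.tendsto_inexact_prox_gradient_average {D : Set H} {G : H → ℝ}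
    (hG : ConvexOn ℝ D G) (hconv : ConvexOn ℝ Set.univ h) (hdiff : Differentiable ℝ h)
    {L : ℝ} (hL : 0 < L) (hlip : ∀ x y : H, ‖gradient h x - gradient h y‖ ≤ L * ‖x - y‖)
    {xs : H} (hxs : xs ∈ D) (hmin : ∀ y ∈ D, G xs + h xs ≤ G y + h y) {e x : ℕ → H}
    (hxD : ∀ k, x (k + 1) ∈ D)
    (hprox : ∀ k, ∀ y ∈ D,
      G (x (k + 1)) + L / 2 * ‖x (k + 1) - (x k - (1 / L) • (gradient h (x k) + e k))‖ ^ 2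
        ≤ G y + L / 2 * ‖y - (x k - (1 / L) • (gradient h (x k) + e k))‖ ^ 2)
    (herr : Tendsto (fun k : ℕ => (√k)⁻¹ * ∑ i ∈ range k, ‖e i‖) atTop (𝓝 0)) :
    Tendsto (fun k : ℕ =>
        G ((k : ℝ)⁻¹ • ∑ j ∈ Icc 1 k, x j) + h ((k : ℝ)⁻¹ • ∑ j ∈ Icc 1 k, x j))
      atTop (𝓝 (G xs + h xs)) := by
  set Φ : H → ℝ := fun y => G y + h y
  have hΦ : ConvexOn ℝ D Φ := hG.add (hconv.subset (Set.subset_univ D) hG.1)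
  have hstep : ∀ k, (Φ (x (k + 1)) - Φ xs) + L / 2 * ‖x (k + 1) - xs‖ ^ 2
      ≤ ‖e k‖ * ‖x (k + 1) - xs‖ + L / 2 * ‖x k - xs‖ ^ 2 := fun k => by
    linarith [inexact_prox_gradient_step_le hG hconv hdiff hL.ne' hlip (hxD k) (hprox k) hxs]
  have hgap : Tendsto (fun k : ℕ => (k : ℝ)⁻¹ * ∑ j ∈ range k, (Φ (x (j + 1)) - Φ xs))
      atTop (𝓝 0) :=
    tendsto_inv_mul_sum_of_step (d := fun k => ‖x k - xs‖) hL
      (fun k => sub_nonneg.2 (hmin _ (hxD k))) (fun _ => norm_nonneg _) (fun _ => norm_nonneg _)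
      hstep herr
  have hupper : Tendsto
      (fun k : ℕ => Φ xs + (k : ℝ)⁻¹ * ∑ j ∈ range k, (Φ (x (j + 1)) - Φ xs)) atTop (𝓝 (Φ xs)) := by
    simpa using tendsto_const_nhds.add hgap
  refine tendsto_of_tendsto_of_tendsto_of_le_of_le' tendsto_const_nhds hupper ?_ ?_
  all_goals filter_upwards [eventually_ne_atTop 0] with k hk
  · exact hmin _ (hG.1.inv_natCast_smul_sum_Icc_mem hxD hk)
  · refine (hΦ.map_inv_natCast_smul_sum_Icc_le hxD hk).trans_eq ?_
    have hk0 : (k : ℝ) ≠ 0 := Nat.cast_ne_zero.2 hk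
    rw [sum_sub_distrib, sum_const, card_range, nsmul_eq_mul]
    field_simp
    ring

end Gradient

lemma EReal.ne_top_of_add_coe_le {a b : EReal} {r s : ℝ} (hb : b ≠ ⊤) (h : a + r ≤ b + s) :
    a ≠ ⊤ := by
  rintro rfl
  rw [EReal.top_add_coe, top_le_iff] at h
  exact EReal.add_ne_top hb (EReal.coe_ne_top s) h

lemma EReal.toReal_add_le_toReal_add {a b : EReal} {r s : ℝ} (ha : a ≠ ⊥) (hb : b ≠ ⊤)
    (hb' : b ≠ ⊥) (h : a + r ≤ b + s) : a.toReal + r ≤ b.toReal + s := by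
  rw [← EReal.coe_toReal (EReal.ne_top_of_add_coe_le hb h) ha, ← EReal.coe_toReal hb hb'] at h
  exact_mod_cast h

lemma ConvexFnE.convexOn_toReal {H : Type*} [AddCommGroup H] [Module ℝ H] {g : H → EReal}
    (hgbot : ∀ x, g x ≠ ⊥) (hg : ConvexFnE g) :
    ConvexOn ℝ {x | g x ≠ ⊤} fun x => (g x).toReal := by
  have hcomb : ∀ ⦃x⦄, g x ≠ ⊤ → ∀ ⦃y⦄, g y ≠ ⊤ → ∀ ⦃a b : ℝ⦄, 0 ≤ a → 0 ≤ b → a + b = 1 →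
      g (a • x + b • y) ≤ ((a * (g x).toReal + b * (g y).toReal : ℝ) : EReal) := by
    intro x hx y hy a b ha hb hab
    have := hg x y a b ha hb hab
    rwa [← EReal.coe_toReal hx (hgbot x), ← EReal.coe_toReal hy (hgbot y)] at this
  refine ⟨fun x hx y hy a b ha hb hab => ?_, fun x hx y hy a b ha hb hab => ?_⟩
  · exact ne_top_of_le_ne_top (EReal.coe_ne_top _) (hcomb hx hy ha hb hab)
  · exact (EReal.toReal_le_toReal (hcomb hx hy ha hb hab) (hgbot _)
      (EReal.coe_ne_top _)).trans_eq (EReal.toReal_coe _)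

section Prox

variable {H : Type*} [NormedAddCommGroup H] {g : H → EReal} {τ : ℝ} {z p y : H}

lemma IsProxPt.ne_top (hp : IsProxPt g τ z p) (hy : g y ≠ ⊤) : g p ≠ ⊤ :=
  EReal.ne_top_of_add_coe_le hy (hp.1 y)

lemma IsProxPt.toReal_add_le (hgbot : ∀ x, g x ≠ ⊥) (hp : IsProxPt g τ z p) (hy : g y ≠ ⊤) :
    (g p).toReal + 1 / (2 * τ) * ‖p - z‖ ^ 2 ≤ (g y).toReal + 1 / (2 * τ) * ‖y - z‖ ^ 2 :=
  EReal.toReal_add_le_toReal_add (hgbot p) hy (hgbot y) (hp.1 y)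

end Prox

theorem inexact_proximal_gradient_average_converges_general
    {H : Type*} [NormedAddCommGroup H] [InnerProductSpace ℝ H] [CompleteSpace H]
    (g : H → EReal) (hgbot : ∀ x, g x ≠ ⊥) (hgproper : ∃ x, g x ≠ ⊤)
    (hgconv : ConvexFnE g)
    (h : H → ℝ) (L : ℝ) (hL : 0 < L)
    (hconv : ConvexOn ℝ Set.univ h) (hdiff : Differentiable ℝ h)
    (hlip : ∀ x y : H, ‖gradient h x - gradient h y‖ ≤ L * ‖x - y‖)
    (xs : H) (hmin : ∀ y : H, g xs + (h xs : EReal) ≤ g y + (h y : EReal))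
    (e : ℕ → H) (x : ℕ → H)
    (hrec : ∀ k : ℕ,
      IsProxPt g (1 / L) (x k - (1 / L) • (gradient h (x k) + e k)) (x (k + 1)))
    (herr : Tendsto
      (fun k : ℕ => (Real.sqrt k)⁻¹ * ∑ i ∈ Finset.range k, ‖e i‖) atTop (nhds 0)) :
    Tendsto
      (fun k : ℕ =>
        g ((k : ℝ)⁻¹ • ∑ j ∈ Finset.Icc 1 k, x j) +
          ((h ((k : ℝ)⁻¹ • ∑ j ∈ Finset.Icc 1 k, x j) : ℝ) : EReal))
      atTop (nhds (g xs + (h xs : EReal))) := by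
  obtain ⟨y₀, hy₀⟩ := hgproper
  have hG := ConvexFnE.convexOn_toReal hgbot hgconv
  have hxs : g xs ≠ ⊤ := EReal.ne_top_of_add_coe_le hy₀ (hmin y₀)
  have hxD : ∀ k, g (x (k + 1)) ≠ ⊤ := fun k => (hrec k).ne_top hy₀
  have hcoef : 1 / (2 * (1 / L)) = L / 2 := by field_simp
  have hreal := hG.tendsto_inexact_prox_gradient_average hconv hdiff hL hlip hxs
    (fun y hy => EReal.toReal_add_le_toReal_add (hgbot xs) hy (hgbot y) (hmin y)) hxD
    (fun k y hy => hcoef ▸ (hrec k).toReal_add_le hgbot hy) herr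
  rw [← EReal.coe_toReal hxs (hgbot xs)]
  refine (EReal.tendsto_coe.2 hreal).congr' ?_
  filter_upwards [eventually_ne_atTop 0] with k hk
  rw [EReal.coe_add, EReal.coe_toReal (hG.1.inv_natCast_smul_sum_Icc_mem hxD hk) (hgbot _)]

/-- Convergence of inexact proximal gradient descent: with step `τ = 1/L`, gradient errors
`e_k`, and iterates `x_{k+1} = prox_{τg}(x_k − τ(∇h(x_k) + e_k))`, if the accumulated errors
satisfy `(1/√k)∑_{i<k}‖e_i‖ → 0`, then the averaged iterates `x̄_k = (1/k)∑_{j=1}^k x_j`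
satisfy `Φ(x̄_k) → Φ(x*)`, where `Φ = g + h` and `x*` is a minimiser of `Φ`. -/
theorem inexact_proximal_gradient_average_converges
    {H : Type*} [NormedAddCommGroup H] [InnerProductSpace ℝ H] [CompleteSpace H]
    (g : H → EReal) (hgbot : ∀ x, g x ≠ ⊥) (hgproper : ∃ x, g x ≠ ⊤)
    (hgclosed : LowerSemicontinuous g) (hgconv : ConvexFnE g)
    (h : H → ℝ) (L : ℝ) (hL : 0 < L)
    (hconv : ConvexOn ℝ Set.univ h) (hdiff : Differentiable ℝ h)
    (hlip : ∀ x y : H, ‖gradient h x - gradient h y‖ ≤ L * ‖x - y‖)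
    (xs : H) (hmin : ∀ y : H, g xs + (h xs : EReal) ≤ g y + (h y : EReal))
    (e : ℕ → H) (x : ℕ → H)
    (hrec : ∀ k : ℕ,
      IsProxPt g (1 / L) (x k - (1 / L) • (gradient h (x k) + e k)) (x (k + 1)))
    (herr : Tendsto
      (fun k : ℕ => (Real.sqrt k)⁻¹ * ∑ i ∈ Finset.range k, ‖e i‖) atTop (nhds 0)) :
    Tendsto
      (fun k : ℕ =>
        g ((k : ℝ)⁻¹ • ∑ j ∈ Finset.Icc 1 k, x j) +
          ((h ((k : ℝ)⁻¹ • ∑ j ∈ Finset.Icc 1 k, x j) : ℝ) : EReal))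
      atTop (nhds (g xs + (h xs : EReal))) :=
  inexact_proximal_gradient_average_converges_general g hgbot hgproper hgconv h L hL hconv hdiff
    hlip xs hmin e x hrec herr
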